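/- arXiv:2204.11172 — 3 statements merged into one kernel-verified Lean document; each statement's English description precedes it below -/
import Mathlib

section
/- As m → ∞, the sum ∑_{i=1}^{m-1} 1/sin(iπ/m) equals (2/π) m ln m + o(m ln m). -/
/-!
On `(0, π)` the function `1 / sin x` differs from the sum of its two principal parts
`1 / x + 1 / (π - x)` by at most `1`. Evaluated at `x = iπ/m`, both principal parts sum to
`(m/π) H_{m-1}`, and `H_{m-1} = log m + O(1)`; so the sum is `(2/π) m log m + O(m)`.
-/

open Real Finset Asymptotics Filter

lemma one_div_sin_sub_one_div_le_one {x : ℝ} (hx : 0 < x) (hx' : x ≤ π / 2) :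
    1 / sin x - 1 / x ≤ 1 := by
  have hsin : 0 < sin x := sin_pos_of_pos_of_lt_pi hx (by linarith [pi_pos])
  have hcube : x - x ^ 3 / 6 ≤ sin x := sin_ge_sub_cube hx.le
  have hjordan : 2 / π * x ≤ sin x := mul_le_sin hx.le hx'
  have hsmall : x / 6 ≤ 2 / π := by
    rw [div_le_div_iff₀ (by norm_num) pi_pos]; nlinarith [pi_lt_four, pi_pos]
  have key : x - sin x ≤ x * sin x :=
    calc x - sin x ≤ x ^ 2 * (x / 6) := by nlinarith
      _ ≤ x ^ 2 * (2 / π) := by gcongr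
      _ = x * (2 / π * x) := by ring
      _ ≤ x * sin x := by gcongr
  rw [div_sub_div _ _ hsin.ne' hx.ne', div_le_one (by positivity)]
  linarith

lemma abs_one_div_sin_sub_le_one {x : ℝ} (hx : 0 < x) (hx' : x < π) :
    |1 / sin x - (1 / x + 1 / (π - x))| ≤ 1 := by
  wlog hx₂ : x ≤ π / 2 generalizing x
  · have := this (x := π - x) (by linarith) (by linarith) (by linarith)
    rwa [sin_pi_sub, sub_sub_cancel, add_comm] at this
  have hsin_le : sin x ≤ x := sin_le hx.le
  have hsin : 0 < sin x := sin_pos_of_pos_of_lt_pi hx hx'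
  have hlow : 1 / x ≤ 1 / sin x := one_div_le_one_div_of_le hsin hsin_le
  have hup := one_div_sin_sub_one_div_le_one hx hx₂
  have hsupp : 1 / (π - x) ≤ 1 := by
    rw [div_le_one (by linarith)]; linarith [pi_gt_three]
  have hsupp₀ : 0 < 1 / (π - x) := by
    have : 0 < π - x := by linarith
    positivity
  rw [abs_le]; constructor <;> linarith

lemma sum_Icc_one_pred_reflect {M : Type*} [AddCommMonoid M] (f : ℕ → M) (m : ℕ) :
    ∑ i ∈ Icc 1 (m - 1), f (m - i) = ∑ i ∈ Icc 1 (m - 1), f i := by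
  have hIcc : Icc 1 (m - 1) = Ico 1 m := by
    ext i; simp only [mem_Icc, mem_Ico]; omega
  simpa [hIcc] using sum_Ico_reflect f 1 (Nat.le_succ m)

lemma abs_harmonic_pred_sub_log_le_one {m : ℕ} (hm : 0 < m) :
    |(harmonic (m - 1) : ℝ) - log m| ≤ 1 := by
  have hlow : log m ≤ harmonic (m - 1) := by
    simpa [Nat.sub_add_cancel hm] using log_add_one_le_harmonic (m - 1)
  have hup : (harmonic (m - 1) : ℝ) ≤ 1 + log (m - 1 : ℕ) := harmonic_le_one_add_log _
  have hlog : log (m - 1 : ℕ) ≤ log m := by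
    rcases Nat.lt_or_ge 1 m with h | h
    · exact log_le_log (by exact_mod_cast Nat.sub_pos_of_lt h) (by exact_mod_cast Nat.sub_le m 1)
    · simp [show m = 1 by omega]
  rw [abs_le]; constructor <;> linarith

lemma sum_Icc_one_div_angle {m : ℕ} (hm : 0 < m) :
    ∑ i ∈ Icc 1 (m - 1), 1 / ((i : ℝ) * π / m) = m / π * harmonic (m - 1) := by
  simp only [harmonic_eq_sum_Icc, Rat.cast_sum, Rat.cast_inv, Rat.cast_natCast, mul_sum]
  refine sum_congr rfl fun i _ => ?_
  field_simp

lemma abs_sum_one_div_sin_sub_le {m : ℕ} (hm : 0 < m) :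
    |∑ i ∈ Icc 1 (m - 1), 1 / sin ((i : ℝ) * π / m) - 2 / π * m * log m| ≤ 2 * m := by
  set x : ℕ → ℝ := fun i => (i : ℝ) * π / m with hx
  change |∑ i ∈ Icc 1 (m - 1), 1 / sin (x i) - _| ≤ _
  have hterm : ∀ i ∈ Icc 1 (m - 1), |1 / sin (x i) - (1 / x i + 1 / x (m - i))| ≤ 1 := by
    intro i hi
    rw [mem_Icc] at hi
    have him : i < m := by omega
    have hsupp : x (m - i) = π - x i := by
      simp only [hx, Nat.cast_sub him.le]; field_simp
    have hpos : 0 < x i := by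
      have : (0 : ℝ) < i := by exact_mod_cast hi.1
      simp only [hx]; positivity
    have hlt : x i < π := by
      simp only [hx]; rw [div_lt_iff₀ (by positivity)]
      nlinarith [pi_pos, (by exact_mod_cast him : (i : ℝ) < m)]
    rw [hsupp]
    exact abs_one_div_sin_sub_le_one hpos hlt
  have hcomp : ∑ i ∈ Icc 1 (m - 1), (1 / x i + 1 / x (m - i)) = 2 * m / π * harmonic (m - 1) := by
    rw [sum_add_distrib, sum_Icc_one_pred_reflect (fun i => 1 / x i), sum_Icc_one_div_angle hm]
    ring
  have hsum : |∑ i ∈ Icc 1 (m - 1), (1 / sin (x i) - (1 / x i + 1 / x (m - i)))| ≤ m :=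
    calc _ ≤ ∑ i ∈ Icc 1 (m - 1), |1 / sin (x i) - (1 / x i + 1 / x (m - i))| :=
          abs_sum_le_sum_abs _ _
      _ ≤ ∑ i ∈ Icc 1 (m - 1), (1 : ℝ) := sum_le_sum hterm
      _ ≤ m := by simp
  have hharm : |2 * m / π * ((harmonic (m - 1) : ℝ) - log m)| ≤ m := by
    rw [abs_mul, abs_of_pos (by positivity)]
    calc 2 * m / π * |(harmonic (m - 1) : ℝ) - log m| ≤ 2 * m / π * 1 := by
          gcongr; exact abs_harmonic_pred_sub_log_le_one hm
      _ ≤ m := by rw [mul_one, div_le_iff₀ pi_pos]; nlinarith [pi_gt_three]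
  calc _ = |∑ i ∈ Icc 1 (m - 1), (1 / sin (x i) - (1 / x i + 1 / x (m - i)))
          + 2 * m / π * ((harmonic (m - 1) : ℝ) - log m)| := by
        rw [sum_sub_distrib, hcomp]; ring_nf
    _ ≤ m + m := (abs_add_le _ _).trans (add_le_add hsum hharm)
    _ = 2 * m := by ring

lemma isLittleO_natCast_mul_log :
    (fun m : ℕ => (m : ℝ)) =o[atTop] fun m : ℕ => (m : ℝ) * log m := by
  have hlog : (fun _ : ℕ => (1 : ℝ)) =o[atTop] fun m : ℕ => log m :=
    isLittleO_const_log_atTop.comp_tendsto tendsto_natCast_atTop_atTop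
  simpa using (isBigO_refl (fun m : ℕ => (m : ℝ)) atTop).mul_isLittleO hlog

theorem stmt2 :
    (fun m : ℕ => (∑ i ∈ Finset.Icc 1 (m - 1), 1 / Real.sin ((i : ℝ) * Real.pi / m))
        - (2 / Real.pi) * (m : ℝ) * Real.log m)
      =o[Filter.atTop] (fun m : ℕ => (m : ℝ) * Real.log m) := by
  have hbound : (fun m : ℕ => (∑ i ∈ Icc 1 (m - 1), 1 / sin ((i : ℝ) * π / m))
      - 2 / π * m * log m) =O[atTop] fun m : ℕ => (m : ℝ) := by
    refine IsBigO.of_bound 2 ?_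
    filter_upwards [eventually_gt_atTop 0] with m hm
    simpa only [norm_eq_abs, Nat.abs_cast] using abs_sum_one_div_sin_sub_le hm
  exact hbound.trans_isLittleO isLittleO_natCast_mul_log
end

section
/- Let U: ℝ³ → ℝ satisfy 0 < U(x) ≤ C e^{-|x|}. Then there exists C' > 0 such that for every z ∈ ℝ³ with |z| ≥ 1 and every x ∈ ℝ³: ∫_{ℝ³} U(y - z)² / |x - y| dy ≤ C' ( e^{-|x-z|/2}(|x - z|² + |x-z| + 1 + 1/|x-z|) + 1/|x - z| ). -/
open Real MeasureTheory Metric Set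

lemma stmt15_exp_sq (t : ℝ) : Real.exp t ^ 2 = Real.exp (2 * t) := by
  rw [← Real.exp_nat_mul]; norm_num

lemma stmt15_finrank : Module.finrank ℝ (EuclideanSpace ℝ (Fin 3)) = 3 :=
  finrank_euclideanSpace_fin

lemma stmt15_lint_ball (x : EuclideanSpace ℝ (Fin 3)) {r : ℝ} (hr : 0 < r) :
    ∫⁻ y, ENNReal.ofReal ((Metric.ball x r).indicator (fun y => (dist x y)⁻¹) y) ≤
      ENNReal.ofReal
        (2 * (volume (Metric.ball (0 : EuclideanSpace ℝ (Fin 3)) 1)).toReal * r ^ 2) := by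
  set B' := volume (Metric.ball (0 : EuclideanSpace ℝ (Fin 3)) 1) with hB'
  have hB'top : B' ≠ ⊤ := measure_ball_lt_top.ne
  set g : EuclideanSpace ℝ (Fin 3) → ℝ :=
    (Metric.ball x r).indicator (fun y => (dist x y)⁻¹) with hg
  have g_meas : Measurable g :=
    Measurable.indicator ((measurable_const.dist measurable_id).inv) measurableSet_ball
  have g_nn : ∀ y, 0 ≤ g y := fun y =>
    Set.indicator_nonneg (fun y _ => inv_nonneg.mpr dist_nonneg) y
  rw [lintegral_eq_lintegral_meas_le volume (Filter.Eventually.of_forall g_nn)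
    g_meas.aemeasurable]
  have h1 : ∀ t ∈ Ioc (0:ℝ) r⁻¹, volume {a | t ≤ g a} ≤ ENNReal.ofReal (r ^ 3) * B' := by
    intro t ht
    have hsub : {a | t ≤ g a} ⊆ Metric.ball x r := by
      intro a ha
      by_contra h
      have h0 : g a = 0 := Set.indicator_of_notMem h _
      have hta : t ≤ g a := ha
      rw [h0] at hta
      exact absurd (ht.1.trans_le hta) (lt_irrefl 0)
    calc volume {a | t ≤ g a} ≤ volume (Metric.ball x r) := measure_mono hsub
      _ = ENNReal.ofReal (r ^ 3) * B' := by
          rw [Measure.addHaar_ball volume x hr.le, stmt15_finrank, hB']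
  have h2 : ∀ t ∈ Ioi (r⁻¹ : ℝ), volume {a | t ≤ g a} ≤ ENNReal.ofReal (t ^ (-3:ℝ)) * B' := by
    intro t ht
    have ht0 : (0:ℝ) < t := (inv_pos.mpr hr).trans ht
    have hsub : {a | t ≤ g a} ⊆ Metric.closedBall x t⁻¹ := by
      intro a ha
      have h1' : t ≤ g a := ha
      have hga : g a ≤ (dist x a)⁻¹ := by
        by_cases h : a ∈ Metric.ball x r
        · rw [hg, Set.indicator_of_mem h]
        · rw [hg, Set.indicator_of_notMem h]; exact inv_nonneg.mpr dist_nonneg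
      have h2' : t ≤ (dist x a)⁻¹ := h1'.trans hga
      have hd0 : 0 < dist x a := by
        by_contra h
        push_neg at h
        have : dist x a = 0 := le_antisymm h dist_nonneg
        rw [this] at h2'; simp at h2'; linarith
      have hmul : t * dist x a ≤ 1 := by
        calc t * dist x a ≤ (dist x a)⁻¹ * dist x a := mul_le_mul_of_nonneg_right h2' dist_nonneg
          _ = 1 := inv_mul_cancel₀ hd0.ne'
      have : dist x a ≤ t⁻¹ := by
        rw [← one_div, le_div_iff₀ ht0]; linarith [hmul, mul_comm t (dist x a)]
      rw [Metric.mem_closedBall, dist_comm]; exact this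
    have heq : (t⁻¹ : ℝ) ^ (3:ℕ) = t ^ (-3:ℝ) := by
      rw [show (-3:ℝ) = -((3:ℕ):ℝ) by norm_num, Real.rpow_neg ht0.le, Real.rpow_natCast, inv_pow]
    calc volume {a | t ≤ g a} ≤ volume (Metric.closedBall x t⁻¹) := measure_mono hsub
      _ = ENNReal.ofReal (t ^ (-3:ℝ)) * B' := by
          rw [Measure.addHaar_closedBall volume x (inv_nonneg.mpr ht0.le), stmt15_finrank, heq, hB']
  calc ∫⁻ t in Ioi (0:ℝ), volume {a | t ≤ g a}
      ≤ ∫⁻ t in Ioc (0:ℝ) r⁻¹ ∪ Ioi r⁻¹, volume {a | t ≤ g a} :=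
        lintegral_mono_set Ioi_subset_Ioc_union_Ioi
    _ ≤ (∫⁻ t in Ioc (0:ℝ) r⁻¹, volume {a | t ≤ g a}) +
          ∫⁻ t in Ioi (r⁻¹:ℝ), volume {a | t ≤ g a} := lintegral_union_le _ _ _
    _ ≤ (∫⁻ _ in Ioc (0:ℝ) r⁻¹, ENNReal.ofReal (r ^ 3) * B') +
          ∫⁻ t in Ioi (r⁻¹:ℝ), ENNReal.ofReal (t ^ (-3:ℝ)) * B' :=
        add_le_add (setLIntegral_mono' measurableSet_Ioc h1) (setLIntegral_mono' measurableSet_Ioi h2)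
    _ ≤ ENNReal.ofReal (2 * B'.toReal * r ^ 2) := by
        have hval : ∫⁻ t in Ioi (r⁻¹:ℝ), ENNReal.ofReal (t ^ (-3:ℝ)) =
            ENNReal.ofReal (r ^ 2 / 2) := by
          rw [← ofReal_integral_eq_lintegral_ofReal
            (integrableOn_Ioi_rpow_of_lt (by norm_num) (inv_pos.mpr hr))
            ((ae_restrict_iff' measurableSet_Ioi).mpr (Filter.Eventually.of_forall
              (fun t ht => Real.rpow_nonneg (le_of_lt ((inv_pos.mpr hr).trans ht)) _)))]
          congr 1
          rw [integral_Ioi_rpow_of_lt (by norm_num) (inv_pos.mpr hr)]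
          rw [show (-3:ℝ) + 1 = -2 by norm_num]
          rw [show ((-2:ℝ)) = -((2:ℕ):ℝ) by norm_num, Real.rpow_neg (inv_nonneg.mpr hr.le),
            Real.rpow_natCast, inv_pow, inv_inv]
          ring
        rw [setLIntegral_const, lintegral_mul_const' B' _ hB'top, Real.volume_Ioc, hval, sub_zero]
        calc ENNReal.ofReal (r ^ 3) * B' * ENNReal.ofReal r⁻¹ +
              ENNReal.ofReal (r ^ 2 / 2) * B'
            = (ENNReal.ofReal (r ^ 3 * r⁻¹) + ENNReal.ofReal (r ^ 2 / 2)) * B' := by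
              rw [mul_right_comm, ← ENNReal.ofReal_mul (by positivity), add_mul]
          _ = ENNReal.ofReal (r ^ 3 * r⁻¹ + r ^ 2 / 2) * B' := by
              rw [ENNReal.ofReal_add (by positivity) (by positivity)]
          _ ≤ ENNReal.ofReal (2 * r ^ 2) * B' := by
              gcongr
              have h33 : r ^ 3 * r⁻¹ = r ^ 2 := by field_simp
              rw [h33]; nlinarith [sq_nonneg r]
          _ = ENNReal.ofReal (2 * r ^ 2) * ENNReal.ofReal B'.toReal := by
              rw [ENNReal.ofReal_toReal hB'top]
          _ = ENNReal.ofReal (2 * r ^ 2 * B'.toReal) :=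
              (ENNReal.ofReal_mul (by positivity)).symm
          _ = ENNReal.ofReal (2 * B'.toReal * r ^ 2) := by ring_nf

lemma stmt15_lint_exp (z : EuclideanSpace ℝ (Fin 3)) :
    ∫⁻ y, ENNReal.ofReal (Real.exp (-2 * ‖y - z‖)) ≤
      ENNReal.ofReal
        (54 * (volume (Metric.ball (0 : EuclideanSpace ℝ (Fin 3)) 1)).toReal) := by
  set B' := volume (Metric.ball (0 : EuclideanSpace ℝ (Fin 3)) 1) with hB'
  have hB'top : B' ≠ ⊤ := measure_ball_lt_top.ne
  set g : EuclideanSpace ℝ (Fin 3) → ℝ := fun y => Real.exp (-2 * ‖y - z‖) with hg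
  have g_meas : Measurable g :=
    (Real.continuous_exp.comp
      (continuous_const.mul ((continuous_id.sub continuous_const).norm))).measurable
  have g_nn : ∀ y, 0 ≤ g y := fun y => (Real.exp_pos _).le
  rw [lintegral_eq_lintegral_meas_le volume (Filter.Eventually.of_forall g_nn)
    g_meas.aemeasurable]
  have h1 : ∀ t ∈ Ioc (0:ℝ) 1, volume {a | t ≤ g a} ≤
      ENNReal.ofReal (27 * t ^ (-(1:ℝ)/2)) * B' := by
    intro t ht
    have hu0 : 0 ≤ -Real.log t := neg_nonneg.mpr (Real.log_nonpos ht.1.le ht.2)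
    have hsub : {a | t ≤ g a} ⊆ Metric.closedBall z (-Real.log t / 2) := by
      intro a ha
      have h1' : t ≤ Real.exp (-2 * ‖a - z‖) := ha
      have h2' : Real.log t ≤ -2 * ‖a - z‖ := by
        have := Real.log_le_log ht.1 h1'
        rwa [Real.log_exp] at this
      rw [Metric.mem_closedBall, dist_eq_norm]
      linarith
    have hrad : ((-Real.log t / 2 : ℝ)) ^ (3:ℕ) ≤ 27 * t ^ (-(1:ℝ)/2) := by
      set u := -Real.log t with hu
      have htu : t ^ (-(1:ℝ)/2) = Real.exp (u / 2) := by
        rw [Real.rpow_def_of_pos ht.1, hu]; ring_nf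
      have h6 : u / 6 ≤ Real.exp (u / 6) := by linarith [Real.add_one_le_exp (u / 6)]
      have h7 : (u / 6) ^ (3:ℕ) ≤ Real.exp (u / 6) ^ (3:ℕ) :=
        pow_le_pow_left₀ (by positivity) h6 3
      have h8 : Real.exp (u / 6) ^ (3:ℕ) = Real.exp (u / 2) := by
        rw [← Real.exp_nat_mul]; ring_nf
      rw [htu]
      rw [h8] at h7
      nlinarith [h7]
    calc volume {a | t ≤ g a} ≤ volume (Metric.closedBall z (-Real.log t / 2)) :=
          measure_mono hsub
      _ = ENNReal.ofReal ((-Real.log t / 2) ^ (3:ℕ)) * B' := by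
          rw [Measure.addHaar_closedBall volume z (by positivity), stmt15_finrank, hB']
      _ ≤ ENNReal.ofReal (27 * t ^ (-(1:ℝ)/2)) * B' :=
          mul_le_mul_left (ENNReal.ofReal_le_ofReal hrad) B'
  have h2 : ∀ t ∈ Ioi (1:ℝ), volume {a | t ≤ g a} ≤ 0 := by
    intro t ht
    have : {a : EuclideanSpace ℝ (Fin 3) | t ≤ g a} = ∅ := by
      ext a
      simp only [Set.mem_setOf_eq, Set.mem_empty_iff_false, iff_false, not_le]
      calc g a ≤ 1 := Real.exp_le_one_iff.mpr (by nlinarith [norm_nonneg (a - z)])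
        _ < t := ht
    rw [this, measure_empty]
  calc ∫⁻ t in Ioi (0:ℝ), volume {a | t ≤ g a}
      ≤ ∫⁻ t in Ioc (0:ℝ) 1 ∪ Ioi 1, volume {a | t ≤ g a} :=
        lintegral_mono_set Ioi_subset_Ioc_union_Ioi
    _ ≤ (∫⁻ t in Ioc (0:ℝ) 1, volume {a | t ≤ g a}) +
          ∫⁻ t in Ioi (1:ℝ), volume {a | t ≤ g a} := lintegral_union_le _ _ _
    _ ≤ (∫⁻ t in Ioc (0:ℝ) 1, ENNReal.ofReal (27 * t ^ (-(1:ℝ)/2)) * B') +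
          ∫⁻ _ in Ioi (1:ℝ), 0 :=
        add_le_add (setLIntegral_mono' measurableSet_Ioc h1) (setLIntegral_mono' measurableSet_Ioi h2)
    _ ≤ ENNReal.ofReal (54 * B'.toReal) := by
        rw [lintegral_zero, add_zero, lintegral_mul_const' B' _ hB'top]
        have hint : IntegrableOn (fun t : ℝ => 27 * t ^ (-(1:ℝ)/2)) (Ioc 0 1) := by
          rw [← intervalIntegrable_iff_integrableOn_Ioc_of_le zero_le_one]
          exact (intervalIntegral.intervalIntegrable_rpow' (by norm_num)).const_mul 27
        have hval : ∫⁻ t in Ioc (0:ℝ) 1, ENNReal.ofReal (27 * t ^ (-(1:ℝ)/2)) =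
            ENNReal.ofReal 54 := by
          rw [← ofReal_integral_eq_lintegral_ofReal hint
            ((ae_restrict_iff' measurableSet_Ioc).mpr (Filter.Eventually.of_forall
              (fun t ht => mul_nonneg (by norm_num) (Real.rpow_nonneg ht.1.le _))))]
          congr 1
          rw [integral_const_mul]
          rw [← intervalIntegral.integral_of_le zero_le_one,
            integral_rpow (Or.inl (by norm_num))]
          rw [Real.one_rpow, Real.zero_rpow (by norm_num)]
          norm_num
        rw [hval]
        refine le_of_eq ?_
        calc ENNReal.ofReal 54 * B' = ENNReal.ofReal 54 * ENNReal.ofReal B'.toReal := by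
              rw [ENNReal.ofReal_toReal hB'top]
          _ = ENNReal.ofReal (54 * B'.toReal) := (ENNReal.ofReal_mul (by norm_num)).symm

set_option maxHeartbeats 1000000 in
theorem stmt15 (U : EuclideanSpace ℝ (Fin 3) → ℝ) (C : ℝ) (hC : 0 < C)
    (hUpos : ∀ x, 0 < U x) (hUdec : ∀ x, U x ≤ C * Real.exp (-‖x‖)) :
    ∃ C' > (0 : ℝ), ∀ z : EuclideanSpace ℝ (Fin 3), 1 ≤ ‖z‖ →
      ∀ x : EuclideanSpace ℝ (Fin 3),
        (∫ y, (U (y - z)) ^ 2 / dist x y) ≤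
          C' * (Real.exp (-dist x z / 2) *
              ((dist x z) ^ 2 + dist x z + 1 + 1 / dist x z) + 1 / dist x z) := by
  classical
  set B : ℝ := (volume (Metric.ball (0 : EuclideanSpace ℝ (Fin 3)) 1)).toReal with hBdef
  have hB : 0 ≤ B := ENNReal.toReal_nonneg
  refine ⟨B*C^2/2 + 108*B*C^2 + 56*B*C^2*Real.exp 2 + 1, by positivity, ?_⟩
  intro z _ x
  set D : ℝ := dist x z with hDdef
  have hD0 : 0 ≤ D := dist_nonneg
  set C' : ℝ := B*C^2/2 + 108*B*C^2 + 56*B*C^2*Real.exp 2 + 1 with hC'def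
  have hC'0 : 0 < C' := by positivity
  set a : ℝ := Real.exp (-D / 2) with hadef
  have ha0 : 0 < a := Real.exp_pos _
  have h1D : 0 ≤ 1/D := one_div_nonneg.mpr hD0
  have hbrpos : 0 ≤ D^2 + D + 1 + 1/D := by linarith [sq_nonneg D, hD0, h1D]
  have hbr0 : 0 ≤ a * (D^2 + D + 1 + 1/D) + 1/D := by
    have := mul_nonneg ha0.le hbrpos; linarith
  set f : EuclideanSpace ℝ (Fin 3) → ℝ := fun y => U (y - z) ^ 2 / dist x y with hfdef
  have hf0 : ∀ y, 0 ≤ f y := fun y => div_nonneg (sq_nonneg _) dist_nonneg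
  by_cases hint : Integrable f
  case neg =>
    rw [integral_undef hint]
    exact mul_nonneg hC'0.le hbr0
  case pos =>
  rw [show (∫ y, f y) = (∫⁻ y, ENNReal.ofReal (f y)).toReal from
    integral_eq_lintegral_of_nonneg_ae (Filter.Eventually.of_forall hf0)
      hint.aestronglyMeasurable]
  have hU2 : ∀ y : EuclideanSpace ℝ (Fin 3),
      U (y - z) ^ 2 ≤ C^2 * Real.exp (-2 * ‖y - z‖) := by
    intro y
    calc U (y - z) ^ 2 ≤ (C * Real.exp (-‖y - z‖)) ^ 2 :=
          pow_le_pow_left₀ (hUpos _).le (hUdec _) 2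
      _ = C^2 * Real.exp (-2 * ‖y - z‖) := by
          rw [mul_pow, stmt15_exp_sq]; ring_nf
  have me : Measurable fun y : EuclideanSpace ℝ (Fin 3) =>
      ENNReal.ofReal (Real.exp (-2 * ‖y - z‖)) :=
    ENNReal.measurable_ofReal.comp
      (Real.continuous_exp.comp
        (continuous_const.mul ((continuous_id.sub continuous_const).norm))).measurable
  -- generic bound machine
  have machine : ∀ (r c₁ c₂ : ℝ), 0 < r → 0 ≤ c₁ → 0 ≤ c₂ →
      (∀ y, f y ≤ c₁ * (Metric.ball x r).indicator (fun y => (dist x y)⁻¹) y +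
        c₂ * Real.exp (-2 * ‖y - z‖)) →
      (∫⁻ y, ENNReal.ofReal (f y)).toReal ≤ c₁ * (2*B*r^2) + c₂ * (54*B) := by
    intro r c₁ c₂ hr hc₁ hc₂ hptw
    have mi : Measurable fun y : EuclideanSpace ℝ (Fin 3) =>
        ENNReal.ofReal ((Metric.ball x r).indicator (fun y => (dist x y)⁻¹) y) :=
      ENNReal.measurable_ofReal.comp
        (Measurable.indicator ((measurable_const.dist measurable_id).inv) measurableSet_ball)
    have step1 : ∫⁻ y, ENNReal.ofReal (f y) ≤
        ∫⁻ y, (ENNReal.ofReal c₁ *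
            ENNReal.ofReal ((Metric.ball x r).indicator (fun y => (dist x y)⁻¹) y) +
          ENNReal.ofReal c₂ * ENNReal.ofReal (Real.exp (-2 * ‖y - z‖))) := by
      apply lintegral_mono
      intro y
      have hind : 0 ≤ (Metric.ball x r).indicator
          (fun y : EuclideanSpace ℝ (Fin 3) => (dist x y)⁻¹) y :=
        Set.indicator_nonneg (fun y _ => inv_nonneg.mpr dist_nonneg) y
      calc ENNReal.ofReal (f y)
          ≤ ENNReal.ofReal (c₁ * (Metric.ball x r).indicator (fun y => (dist x y)⁻¹) y +
              c₂ * Real.exp (-2 * ‖y - z‖)) := ENNReal.ofReal_le_ofReal (hptw y)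
        _ = _ := by
            rw [ENNReal.ofReal_add (mul_nonneg hc₁ hind)
              (mul_nonneg hc₂ (Real.exp_pos _).le),
              ENNReal.ofReal_mul hc₁, ENNReal.ofReal_mul hc₂]
    rw [lintegral_add_left (mi.const_mul _), lintegral_const_mul _ mi,
      lintegral_const_mul _ me] at step1
    have b1 := stmt15_lint_ball x hr
    have b2 := stmt15_lint_exp z
    rw [← hBdef] at b1 b2
    have step2 : ∫⁻ y, ENNReal.ofReal (f y) ≤
        ENNReal.ofReal (c₁ * (2*B*r^2) + c₂ * (54*B)) := by
      refine step1.trans ?_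
      calc _ ≤ ENNReal.ofReal c₁ * ENNReal.ofReal (2*B*r^2) +
            ENNReal.ofReal c₂ * ENNReal.ofReal (54*B) :=
          add_le_add (mul_le_mul_right b1 _) (mul_le_mul_right b2 _)
        _ = ENNReal.ofReal (c₁ * (2*B*r^2) + c₂ * (54*B)) := by
            rw [← ENNReal.ofReal_mul hc₁, ← ENNReal.ofReal_mul hc₂,
              ← ENNReal.ofReal_add (mul_nonneg hc₁ (by positivity))
                (mul_nonneg hc₂ (by positivity))]
    exact ENNReal.toReal_le_of_le_ofReal
      (add_nonneg (mul_nonneg hc₁ (by positivity)) (mul_nonneg hc₂ (by positivity))) step2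
  rcases le_or_gt 4 D with hD4 | hD4
  · -- far case
    have hDpos : (0:ℝ) < D := by linarith
    have hc₁ : 0 ≤ C^2 * Real.exp (-D) := mul_nonneg (sq_nonneg C) (Real.exp_pos _).le
    have hc₂ : 0 ≤ C^2 * (2/D) := mul_nonneg (sq_nonneg C) (by positivity)
    have hptw : ∀ y, f y ≤ (C^2 * Real.exp (-D)) *
        (Metric.ball x (D/2)).indicator (fun y => (dist x y)⁻¹) y +
        (C^2 * (2/D)) * Real.exp (-2 * ‖y - z‖) := by
      intro y
      have hU2y := hU2 y
      have hexpnn : (0:ℝ) ≤ Real.exp (-2 * ‖y - z‖) := (Real.exp_pos _).le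
      have hfy : f y = U (y - z) ^ 2 * (dist x y)⁻¹ := div_eq_mul_inv _ _
      by_cases hy : y ∈ Metric.ball x (D/2)
      · rw [Set.indicator_of_mem hy]
        have h2' : dist x y < D/2 := by rw [dist_comm]; exact mem_ball.mp hy
        have hdn : D/2 ≤ ‖y - z‖ := by
          have h1' : D ≤ dist x y + dist y z := dist_triangle x y z
          have h3' : dist y z = ‖y - z‖ := dist_eq_norm y z
          linarith [h3' ▸ h1']
        have hee : Real.exp (-2 * ‖y - z‖) ≤ Real.exp (-D) :=
          Real.exp_le_exp.mpr (by linarith)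
        have hinv : (0:ℝ) ≤ (dist x y)⁻¹ := inv_nonneg.mpr dist_nonneg
        have hstep : f y ≤ (C^2 * Real.exp (-D)) * (dist x y)⁻¹ := by
          rw [hfy]
          calc U (y - z) ^ 2 * (dist x y)⁻¹
              ≤ (C^2 * Real.exp (-2 * ‖y - z‖)) * (dist x y)⁻¹ :=
              mul_le_mul_of_nonneg_right hU2y hinv
            _ ≤ (C^2 * Real.exp (-D)) * (dist x y)⁻¹ :=
              mul_le_mul_of_nonneg_right
                (mul_le_mul_of_nonneg_left hee (sq_nonneg C)) hinv
        linarith [hstep, mul_nonneg hc₂ hexpnn]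
      · rw [Set.indicator_of_notMem hy]
        have hd : D/2 ≤ dist x y := by
          rw [dist_comm]
          exact not_lt.mp (fun h => hy (mem_ball.mpr h))
        have hd0 : 0 < dist x y := lt_of_lt_of_le (by linarith) hd
        have key : f y ≤ (C^2 * (2/D)) * Real.exp (-2 * ‖y - z‖) := by
          rw [hfdef]
          simp only
          rw [div_le_iff₀ hd0]
          have h21 : 1 ≤ 2/D * dist x y := by
            rw [div_mul_eq_mul_div, le_div_iff₀ hDpos]; linarith
          calc U (y - z) ^ 2 ≤ C^2 * Real.exp (-2 * ‖y - z‖) := hU2y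
            _ = C^2 * Real.exp (-2 * ‖y - z‖) * 1 := (mul_one _).symm
            _ ≤ C^2 * Real.exp (-2 * ‖y - z‖) * (2/D * dist x y) :=
              mul_le_mul_of_nonneg_left h21 (by positivity)
            _ = C^2 * (2/D) * Real.exp (-2 * ‖y - z‖) * dist x y := by ring
        rw [mul_zero, zero_add]
        exact key
    have hto := machine (D/2) (C^2 * Real.exp (-D)) (C^2 * (2/D))
      (by linarith) hc₁ hc₂ hptw
    refine hto.trans ?_
    have hexpD : Real.exp (-D) = a^2 := by rw [hadef, stmt15_exp_sq]; ring_nf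
    have ha1 : a ≤ 1 := Real.exp_le_one_iff.mpr (by linarith)
    have e0 : C^2 * Real.exp (-D) * (2*B*(D/2)^2) + C^2 * (2/D) * (54*B) =
        (B*C^2/2) * (a^2*D^2) + (108*B*C^2) * (1/D) := by
      rw [hexpD]; ring
    rw [e0]
    have hbig : a^2 * D^2 ≤ a * (D^2+D+1+1/D) := by
      linarith [mul_nonneg (mul_nonneg ha0.le (sq_nonneg D)) (sub_nonneg.mpr ha1),
        mul_nonneg ha0.le hD0, mul_nonneg ha0.le h1D, ha0.le]
    have hBC : 0 ≤ B * C^2 := mul_nonneg hB (sq_nonneg C)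
    have hBCe : 0 ≤ B * C^2 * Real.exp 2 := mul_nonneg hBC (Real.exp_pos _).le
    have hco1 : B*C^2/2 ≤ C' := by rw [hC'def]; linarith [hBC, hBCe]
    have hco2 : 108*B*C^2 ≤ C' := by rw [hC'def]; linarith [hBC, hBCe]
    have t1 : (B*C^2/2) * (a^2*D^2) ≤ C' * (a*(D^2+D+1+1/D)) :=
      mul_le_mul hco1 hbig (mul_nonneg (sq_nonneg a) (sq_nonneg D)) hC'0.le
    have t2 : (108*B*C^2)*(1/D) ≤ C' * (1/D) := mul_le_mul_of_nonneg_right hco2 h1D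
    linarith [t1, t2]
  · -- near case
    have hptw : ∀ y, f y ≤ (C^2) *
        (Metric.ball x 1).indicator (fun y => (dist x y)⁻¹) y +
        (C^2) * Real.exp (-2 * ‖y - z‖) := by
      intro y
      have hU2y := hU2 y
      have hexpnn : (0:ℝ) ≤ Real.exp (-2 * ‖y - z‖) := (Real.exp_pos _).le
      have hfy : f y = U (y - z) ^ 2 * (dist x y)⁻¹ := div_eq_mul_inv _ _
      have hexple : Real.exp (-2 * ‖y - z‖) ≤ 1 :=
        Real.exp_le_one_iff.mpr (by nlinarith [norm_nonneg (y - z)])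
      by_cases hy : y ∈ Metric.ball x 1
      · rw [Set.indicator_of_mem hy]
        have hinv : (0:ℝ) ≤ (dist x y)⁻¹ := inv_nonneg.mpr dist_nonneg
        have hstep : f y ≤ C^2 * (dist x y)⁻¹ := by
          rw [hfy]
          calc U (y - z) ^ 2 * (dist x y)⁻¹
              ≤ (C^2 * Real.exp (-2 * ‖y - z‖)) * (dist x y)⁻¹ :=
              mul_le_mul_of_nonneg_right hU2y hinv
            _ ≤ (C^2 * 1) * (dist x y)⁻¹ :=
              mul_le_mul_of_nonneg_right
                (mul_le_mul_of_nonneg_left hexple (sq_nonneg C)) hinv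
            _ = C^2 * (dist x y)⁻¹ := by ring
        linarith [hstep, mul_nonneg (sq_nonneg C) hexpnn]
      · rw [Set.indicator_of_notMem hy]
        have hd : 1 ≤ dist x y := by
          rw [dist_comm]
          exact not_lt.mp (fun h => hy (mem_ball.mpr h))
        have hinvle : (dist x y)⁻¹ ≤ 1 := by
          have := inv_anti₀ one_pos hd
          simpa using this
        have key : f y ≤ C^2 * Real.exp (-2 * ‖y - z‖) := by
          rw [hfy]
          calc U (y - z) ^ 2 * (dist x y)⁻¹ ≤ U (y - z) ^ 2 * 1 :=
              mul_le_mul_of_nonneg_left hinvle (sq_nonneg _)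
            _ = U (y - z) ^ 2 := mul_one _
            _ ≤ C^2 * Real.exp (-2 * ‖y - z‖) := hU2y
        rw [mul_zero, zero_add]
        exact key
    have hto := machine 1 (C^2) (C^2) one_pos (sq_nonneg C) (sq_nonneg C) hptw
    refine hto.trans ?_
    have ha2 : Real.exp (-2) ≤ a := Real.exp_le_exp.mpr (by linarith)
    have hbr : Real.exp (-2) ≤ a * (D^2+D+1+1/D) + 1/D := by
      linarith [ha2, mul_nonneg ha0.le (sq_nonneg D), mul_nonneg ha0.le hD0,
        mul_nonneg ha0.le h1D, h1D, ha0.le]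
    have hee : Real.exp 2 * Real.exp (-2) = 1 := by
      rw [← Real.exp_add]; norm_num
    have hBC : 0 ≤ B * C^2 := mul_nonneg hB (sq_nonneg C)
    have h56 : 0 ≤ 56*B*C^2*Real.exp 2 := by positivity
    have h3 : (56*B*C^2*Real.exp 2) * Real.exp (-2) ≤
        (56*B*C^2*Real.exp 2) * (a * (D^2+D+1+1/D) + 1/D) :=
      mul_le_mul_of_nonneg_left hbr h56
    have h4 : (56*B*C^2*Real.exp 2) * Real.exp (-2) = 56*B*C^2 := by
      rw [mul_assoc, hee, mul_one]
    have h5 : (56*B*C^2*Real.exp 2) * (a * (D^2+D+1+1/D) + 1/D) ≤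
        C' * (a * (D^2+D+1+1/D) + 1/D) := by
      apply mul_le_mul_of_nonneg_right _ hbr0
      rw [hC'def]; linarith [hBC]
    linarith [h3, h4, h5]
end

section
/- Define the map a(t) = √(1-t²) / (ln m + ln π - ln t)^{1/2} for t ∈ [(1-α₀)(ln m)^{-1/2}, (1+α₀)(ln m)^{-1/2}] with α₀ > 0 small. Then for m sufficiently large, a is a contraction on this interval: |a(t₁) - a(t₂)| ≤ (C/ln m)|t₁ - t₂| for a constant C independent of m, and hence a has a unique fixed point t_m in the interval, satisfying t_m = (1 + o(1))(ln m)^{-1/2}. -/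
/-!
With `x = ln m` and `α₀ = 1/2`, the interval is `[1/(2√x), 3/(2√x)]`, i.e. `1/4 ≤ t²x ≤ 9/4`.
For `x ≥ 100` the map sends it into itself because `a(t)² x = (1 - t²) x / (x + ln π - ln t)`
and `x ≤ x + ln π - ln t ≤ x + 4 + ln x` there. On the interval `√(1 - t²)` is `2/√x`-Lipschitz
and the denominator `√(x + ln π - ln t) ≥ √x` is `1`-Lipschitz (`ln t` has slope at most `2√x`),
so the quotient is `3/x`-Lipschitz. The intermediate value theorem gives a fixed point, the
contraction makes it unique, and the bounds on the denominator give `t²x → 1`.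
-/

open Real

/-- The map whose fixed point determines the height parameter `t`. -/
noncomputable def aMap (m : ℕ) (t : ℝ) : ℝ :=
  Real.sqrt (1 - t ^ 2) / Real.sqrt (Real.log m + Real.log Real.pi - Real.log t)

/-- The interval `[(1-α₀)(ln m)^{-1/2}, (1+α₀)(ln m)^{-1/2}]`. -/
noncomputable def tInterval (α₀ : ℝ) (m : ℕ) : Set ℝ :=
  Set.Icc ((1 - α₀) * (Real.log m) ^ (-(1 / 2) : ℝ))
    ((1 + α₀) * (Real.log m) ^ (-(1 / 2) : ℝ))

open Set Filter Topology

lemma abs_sqrt_sub_sqrt_le {a b c : ℝ} (hc : 0 < c) (ha : c ^ 2 ≤ a) (hb : c ^ 2 ≤ b) :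
    |√a - √b| ≤ |a - b| / (2 * c) := by
  have hca : c ≤ √a := le_sqrt_of_sq_le ha
  have hcb : c ≤ √b := le_sqrt_of_sq_le hb
  have hprod : a - b = (√a - √b) * (√a + √b) := by
    linear_combination (sq_sqrt ((sq_nonneg c).trans hb)) - sq_sqrt ((sq_nonneg c).trans ha)
  rw [le_div_iff₀ (by positivity), hprod, abs_mul, abs_of_pos (by linarith : 0 < √a + √b)]
  gcongr
  linarith

lemma abs_log_sub_log_le {a b c : ℝ} (hc : 0 < c) (ha : c ≤ a) (hb : c ≤ b) :
    |log a - log b| ≤ |a - b| / c := by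
  have key : ∀ u v, c ≤ u → c ≤ v → log u - log v ≤ |u - v| / c := fun u v hu hv => by
    have hv0 : 0 < v := hc.trans_le hv
    calc log u - log v = log (u / v) := (log_div (hc.trans_le hu).ne' hv0.ne').symm
      _ ≤ u / v - 1 := log_le_sub_one_of_pos (div_pos (hc.trans_le hu) hv0)
      _ = (u - v) / v := by field_simp
      _ ≤ |u - v| / v := by gcongr; exact le_abs_self _
      _ ≤ |u - v| / c := by gcongr
  rw [abs_sub_le_iff]
  exact ⟨key a b ha hb, abs_sub_comm a b ▸ key b a hb ha⟩

lemma abs_div_sub_div_le {p₁ p₂ q₁ q₂ P Q : ℝ} (hQ : 0 < Q) (hq₁ : Q ≤ q₁) (hq₂ : Q ≤ q₂)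
    (hp₂ : |p₂| ≤ P) : |p₁ / q₁ - p₂ / q₂| ≤ |p₁ - p₂| / Q + P * |q₁ - q₂| / Q ^ 2 := by
  have hq₁0 : 0 < q₁ := hQ.trans_le hq₁
  have hq₂0 : 0 < q₂ := hQ.trans_le hq₂
  have hsplit : p₁ / q₁ - p₂ / q₂ = (p₁ - p₂) / q₁ + p₂ * (q₂ - q₁) / (q₁ * q₂) := by
    field_simp; ring
  calc |p₁ / q₁ - p₂ / q₂| ≤ |(p₁ - p₂) / q₁| + |p₂ * (q₂ - q₁) / (q₁ * q₂)| :=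
        hsplit ▸ abs_add_le _ _
    _ = |p₁ - p₂| / q₁ + |p₂| * |q₁ - q₂| / (q₁ * q₂) := by
        rw [abs_div, abs_div, abs_mul, abs_of_pos hq₁0, abs_of_pos (mul_pos hq₁0 hq₂0),
          abs_sub_comm q₂]
    _ ≤ |p₁ - p₂| / Q + P * |q₁ - q₂| / Q ^ 2 := by
        gcongr ?_ + ?_
        · gcongr
        · have hP : 0 ≤ P := (abs_nonneg _).trans hp₂
          rw [sq]; gcongr

noncomputable def aMapReal (x t : ℝ) : ℝ := √(1 - t ^ 2) / √(x + log π - log t)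

def tIcc (x : ℝ) : Set ℝ := Icc (1 / (2 * √x)) (3 / (2 * √x))

lemma aMap_eq_aMapReal (m : ℕ) : aMap m = aMapReal (log m) := rfl

lemma tInterval_half_eq (m : ℕ) : tInterval (1 / 2) m = tIcc (log m) := by
  rw [tInterval, tIcc, rpow_neg (log_natCast_nonneg m), ← sqrt_eq_rpow]
  congr 1 <;> field_simp <;> norm_num

lemma mem_tIcc_iff {x t : ℝ} (hx : 0 < x) (ht : 0 ≤ t) :
    t ∈ tIcc x ↔ 1 / 4 ≤ t ^ 2 * x ∧ t ^ 2 * x ≤ 9 / 4 := by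
  have hs : 0 < √x := sqrt_pos.2 hx
  have hsq : t ^ 2 * x = (t * √x) ^ 2 := by rw [mul_pow, sq_sqrt hx.le]
  have hlo : 1 / (2 * √x) ≤ t ↔ 1 / 2 ≤ t * √x := by
    rw [div_le_iff₀ (by positivity), div_le_iff₀ two_pos, mul_left_comm, mul_comm 2]
  have hhi : t ≤ 3 / (2 * √x) ↔ t * √x ≤ 3 / 2 := by
    rw [le_div_iff₀ (by positivity), le_div_iff₀ two_pos, mul_left_comm, mul_comm 2]
  rw [tIcc, mem_Icc, hlo, hhi, hsq, show (1 : ℝ) / 4 = (1 / 2) ^ 2 by norm_num,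
    show (9 : ℝ) / 4 = (3 / 2) ^ 2 by norm_num,
    pow_le_pow_iff_left₀ (by norm_num) (by positivity) two_ne_zero,
    pow_le_pow_iff_left₀ (by positivity) (by norm_num) two_ne_zero]

section tIcc

variable {x t : ℝ}

lemma pos_of_mem_tIcc (hx : 0 < x) (ht : t ∈ tIcc x) : 0 < t :=
  lt_of_lt_of_le (by positivity) ht.1

lemma sq_mul_le_of_mem_tIcc (hx : 0 < x) (ht : t ∈ tIcc x) : t ^ 2 * x ≤ 9 / 4 :=
  ((mem_tIcc_iff hx (pos_of_mem_tIcc hx ht).le).1 ht).2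

lemma sq_le_of_mem_tIcc (hx : 100 ≤ x) (ht : t ∈ tIcc x) : t ^ 2 ≤ 1 / 40 := by
  nlinarith [sq_mul_le_of_mem_tIcc (by linarith) ht, sq_nonneg t]

lemma le_add_log_pi_sub_log (hx : 100 ≤ x) (ht : t ∈ tIcc x) : x ≤ x + log π - log t := by
  have ht0 := pos_of_mem_tIcc (by linarith) ht
  have ht1 : t ≤ 1 := by nlinarith [sq_le_of_mem_tIcc hx ht]
  linarith [log_nonpos ht0.le ht1, log_nonneg (by linarith [pi_gt_three] : (1 : ℝ) ≤ π)]

lemma add_log_pi_sub_log_le (hx : 100 ≤ x) (ht : t ∈ tIcc x) :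
    x + log π - log t ≤ x + 4 + log x := by
  have hx0 : 0 < x := by linarith
  have hlog_t : -(log 2 + log x / 2) ≤ log t := by
    calc -(log 2 + log x / 2) = log (1 / (2 * √x)) := by
          rw [one_div, log_inv, log_mul two_ne_zero (sqrt_pos.2 hx0).ne', log_sqrt hx0.le]
      _ ≤ log t := log_le_log (by positivity) ht.1
  have hlog_pi : log π ≤ 3 := by linarith [log_le_sub_one_of_pos pi_pos, pi_le_four]
  have hlog_two : log 2 ≤ 1 := by linarith [log_le_sub_one_of_pos (two_pos : (0 : ℝ) < 2)]
  linarith [log_nonneg (by linarith : (1 : ℝ) ≤ x)]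

end tIcc

section aMapReal

variable {x : ℝ}

lemma aMapReal_sq_mul {t : ℝ} (ht : t ^ 2 ≤ 1) (hD : 0 ≤ x + log π - log t) :
    aMapReal x t ^ 2 * x = (x - t ^ 2 * x) / (x + log π - log t) := by
  rw [aMapReal, div_pow, sq_sqrt (by linarith), sq_sqrt hD]
  ring

lemma mapsTo_aMapReal (hx : 100 ≤ x) : MapsTo (aMapReal x) (tIcc x) (tIcc x) := by
  intro t ht
  have hx0 : 0 < x := by linarith
  have hD := le_add_log_pi_sub_log hx ht
  have hD' := add_log_pi_sub_log_le hx ht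
  have htx := sq_mul_le_of_mem_tIcc hx0 ht
  have ht2 : 0 ≤ t ^ 2 * x := by positivity
  rw [mem_tIcc_iff hx0 (by unfold aMapReal; positivity),
    aMapReal_sq_mul (by linarith [sq_le_of_mem_tIcc hx ht]) (by linarith),
    le_div_iff₀ (by linarith), div_le_iff₀ (by linarith)]
  constructor <;> linarith [log_le_sub_one_of_pos hx0]

lemma abs_aMapReal_sub_le (hx : 100 ≤ x) {t₁ t₂ : ℝ} (h₁ : t₁ ∈ tIcc x) (h₂ : t₂ ∈ tIcc x) :
    |aMapReal x t₁ - aMapReal x t₂| ≤ 3 / x * |t₁ - t₂| := by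
  have hx0 : 0 < x := by linarith
  have hs : 0 < √x := sqrt_pos.2 hx0
  have hsx : √x ^ 2 = x := sq_sqrt hx0.le
  have hnum : |√(1 - t₁ ^ 2) - √(1 - t₂ ^ 2)| ≤ 2 / √x * |t₁ - t₂| := by
    have ht₁ := sq_le_of_mem_tIcc hx h₁
    have ht₂ := sq_le_of_mem_tIcc hx h₂
    have hsum : t₁ + t₂ ≤ 3 / √x := by
      linarith [h₁.2, h₂.2, show 3 / (2 * √x) * 2 = 3 / √x by field_simp]
    calc |√(1 - t₁ ^ 2) - √(1 - t₂ ^ 2)|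
        ≤ |(1 - t₁ ^ 2) - (1 - t₂ ^ 2)| / (2 * (3 / 4)) :=
          abs_sqrt_sub_sqrt_le (by norm_num) (by linarith) (by linarith)
      _ = (t₁ + t₂) * |t₁ - t₂| / (3 / 2) := by
          rw [show (1 - t₁ ^ 2) - (1 - t₂ ^ 2) = (t₁ + t₂) * (t₂ - t₁) by ring, abs_mul,
            abs_of_pos (by linarith [pos_of_mem_tIcc hx0 h₁, pos_of_mem_tIcc hx0 h₂]),
            abs_sub_comm]
          norm_num
      _ ≤ 3 / √x * |t₁ - t₂| / (3 / 2) := by gcongr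
      _ = 2 / √x * |t₁ - t₂| := by ring
  have hden : |√(x + log π - log t₁) - √(x + log π - log t₂)| ≤ |t₁ - t₂| := by
    calc |√(x + log π - log t₁) - √(x + log π - log t₂)|
        ≤ |(x + log π - log t₁) - (x + log π - log t₂)| / (2 * √x) :=
          abs_sqrt_sub_sqrt_le hs (by rw [hsx]; exact le_add_log_pi_sub_log hx h₁)
            (by rw [hsx]; exact le_add_log_pi_sub_log hx h₂)
      _ = |log t₂ - log t₁| / (2 * √x) := by ring_nf
      _ ≤ |t₂ - t₁| / (1 / (2 * √x)) / (2 * √x) := by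
          gcongr; exact abs_log_sub_log_le (by positivity) h₂.1 h₁.1
      _ = |t₁ - t₂| := by rw [abs_sub_comm]; field_simp
  calc |aMapReal x t₁ - aMapReal x t₂|
      ≤ |√(1 - t₁ ^ 2) - √(1 - t₂ ^ 2)| / √x
        + 1 * |√(x + log π - log t₁) - √(x + log π - log t₂)| / √x ^ 2 :=
        abs_div_sub_div_le hs (sqrt_le_sqrt (le_add_log_pi_sub_log hx h₁))
          (sqrt_le_sqrt (le_add_log_pi_sub_log hx h₂))
          (by rw [abs_of_nonneg (sqrt_nonneg _)]; exact sqrt_le_one.2 (by nlinarith))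
    _ ≤ 2 / √x * |t₁ - t₂| / √x + 1 * |t₁ - t₂| / √x ^ 2 := by gcongr
    _ = 3 / x * |t₁ - t₂| := by field_simp; rw [hsx]; ring

lemma exists_aMapReal_eq_self (hx : 100 ≤ x) : ∃ t ∈ tIcc x, aMapReal x t = t := by
  have hcont : ContinuousOn (aMapReal x) (tIcc x) :=
    (LipschitzOnWith.of_dist_le_mul (K := ⟨3 / x, by positivity⟩) fun s hs t ht => by
      rw [Real.dist_eq, Real.dist_eq]; exact abs_aMapReal_sub_le hx hs ht).continuousOn
  exact exists_mem_Icc_isFixedPt_of_mapsTo hcont (by gcongr; norm_num) (mapsTo_aMapReal hx)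

lemma eq_of_aMapReal_eq_self (hx : 100 ≤ x) {s t : ℝ} (hs : s ∈ tIcc x) (ht : t ∈ tIcc x)
    (hfs : aMapReal x s = s) (hft : aMapReal x t = t) : s = t := by
  have hcontr := abs_aMapReal_sub_le hx hs ht
  rw [hfs, hft] at hcontr
  have hK : 3 / x < 1 := by rw [div_lt_one (by linarith)]; linarith
  have := abs_nonneg (s - t)
  exact sub_eq_zero.1 (abs_eq_zero.1 (by nlinarith))

end aMapReal

noncomputable def tFix (x : ℝ) : ℝ := Classical.epsilon fun t => t ∈ tIcc x ∧ aMapReal x t = t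

lemma tFix_spec {x : ℝ} (hx : 100 ≤ x) : tFix x ∈ tIcc x ∧ aMapReal x (tFix x) = tFix x :=
  Classical.epsilon_spec (exists_aMapReal_eq_self hx)

lemma sq_mul_sqrt_mem_Icc_of_aMapReal_eq_self {x t : ℝ} (hx : 100 ≤ x) (ht : t ∈ tIcc x)
    (hft : aMapReal x t = t) :
    (t * √x) ^ 2 ∈ Icc ((x - 9 / 4) / (x + 4 + log x)) 1 := by
  have hx0 : 0 < x := by linarith
  have hD := le_add_log_pi_sub_log hx ht
  have htx := sq_mul_le_of_mem_tIcc hx0 ht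
  have ht2 : 0 ≤ t ^ 2 * x := by positivity
  have hfix : t ^ 2 * x = (x - t ^ 2 * x) / (x + log π - log t) := by
    rw [← aMapReal_sq_mul (by linarith [sq_le_of_mem_tIcc hx ht]) (by linarith), hft]
  rw [mul_pow, sq_sqrt hx0.le, hfix]
  exact ⟨div_le_div₀ (by linarith) (by linarith) (by linarith) (add_log_pi_sub_log_le hx ht),
    (div_le_one (by linarith)).2 (by linarith)⟩

lemma tendsto_sub_div_add_add_log_atTop (a b : ℝ) :
    Tendsto (fun x => (x - a) / (x + b + log x)) atTop (𝓝 1) := by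
  have h := ((tendsto_const_nhds (x := (1 : ℝ))).sub (tendsto_inv_atTop_zero.const_mul a)).div
    ((tendsto_const_nhds.add (tendsto_inv_atTop_zero.const_mul b)).add
      isLittleO_log_id_atTop.tendsto_div_nhds_zero) (by norm_num : (1 : ℝ) + b * 0 + 0 ≠ 0)
  rw [show ((1 : ℝ) - a * 0) / (1 + b * 0 + 0) = 1 by norm_num] at h
  refine h.congr' ?_
  filter_upwards [eventually_gt_atTop 0] with x hx
  rw [Pi.div_apply, id, ← mul_div_mul_left _ _ hx.ne']
  congr 1 <;> field_simp

lemma tendsto_tFix_mul_sqrt : Tendsto (fun x => tFix x * √x) atTop (𝓝 1) := by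
  have hbounds : ∀ᶠ x in atTop, (tFix x * √x) ^ 2 ∈ Icc ((x - 9 / 4) / (x + 4 + log x)) 1 := by
    filter_upwards [eventually_ge_atTop 100] with x hx
    exact sq_mul_sqrt_mem_Icc_of_aMapReal_eq_self hx (tFix_spec hx).1 (tFix_spec hx).2
  have hsq : Tendsto (fun x => (tFix x * √x) ^ 2) atTop (𝓝 1) :=
    tendsto_of_tendsto_of_tendsto_of_le_of_le' (tendsto_sub_div_add_add_log_atTop _ _)
      tendsto_const_nhds (hbounds.mono fun _ h => h.1) (hbounds.mono fun _ h => h.2)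
  have hsqrt := (continuous_sqrt.tendsto 1).comp hsq
  rw [sqrt_one] at hsqrt
  refine hsqrt.congr' ?_
  filter_upwards [eventually_ge_atTop 100] with x hx
  have := pos_of_mem_tIcc (by linarith) (tFix_spec hx).1
  exact sqrt_sq (by positivity)

theorem stmt18 :
    ∃ α₀ > (0 : ℝ), ∃ C > (0 : ℝ), ∃ m₀ : ℕ, ∃ tm : ℕ → ℝ,
      (∀ m : ℕ, m₀ ≤ m →
        (∀ t₁ ∈ tInterval α₀ m, ∀ t₂ ∈ tInterval α₀ m,
          |aMap m t₁ - aMap m t₂| ≤ (C / Real.log m) * |t₁ - t₂|) ∧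
        tm m ∈ tInterval α₀ m ∧ aMap m (tm m) = tm m ∧
        (∀ t ∈ tInterval α₀ m, aMap m t = t → t = tm m)) ∧
      Filter.Tendsto (fun m : ℕ => tm m * Real.sqrt (Real.log m)) Filter.atTop (nhds 1) := by
  refine ⟨1 / 2, by norm_num, 3, by norm_num, ⌈exp 100⌉₊, fun m => tFix (log m),
    fun m hm => ?_, tendsto_tFix_mul_sqrt.comp (tendsto_log_atTop.comp tendsto_natCast_atTop_atTop)⟩
  have hexp : exp 100 ≤ m := Nat.ceil_le.1 hm
  have hx : 100 ≤ log m := (le_log_iff_exp_le ((exp_pos 100).trans_le hexp)).2 hexp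
  rw [tInterval_half_eq, aMap_eq_aMapReal]
  obtain ⟨hmem, hfix⟩ := tFix_spec hx
  exact ⟨fun t₁ h₁ t₂ h₂ => abs_aMapReal_sub_le hx h₁ h₂, hmem, hfix,
    fun t ht hft => eq_of_aMapReal_eq_self hx ht hmem hft hfix⟩
end
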